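/- arXiv:2411.09264 — 5 statements merged into one kernel-verified Lean document; each statement's English description precedes it below -/
import Mathlib

section
/- Let a, b, c, r₀, r₁, r₂, r₃ be elements of a field, and suppose c ≠ 0. Let (λ₁, λ₂) solve cλ₁ + bλ₂ = r₂, cλ₂ = r₃, and set X = r₀ − aλ₁, Y = r₁ − bλ₁ − aλ₂. Then the resultant of r₀x³ + r₁x² + r₂x + r₃ and ax² + bx + c equals c²(cX² − bXY + aY²). -/
/-!
Write `f = r₀x³ + r₁x² + r₂x + r₃` and `g = ax² + bx + c`. The equations for `(λ₁, λ₂)` say exactly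
that `f = (λ₁x + λ₂) g + x²(Xx + Y)`. Subtracting a multiple of `g` from `f` is a column operation
on the Sylvester matrix that does not change its determinant, and the Sylvester matrix of
`x²(Xx + Y)` and `g` is block triangular, with an upper triangular `2 × 2` block of diagonal `c, c`
and a `3 × 3` block of determinant `cX² - bXY + aY²`.
-/

open Polynomial

/-- The Sylvester-style matrix of `f` (viewed as having degree `m`) and `g` (viewed as having
degree `n`): the first `n` columns are the shifted coefficient columns of `f` and the remaining
`m` columns are the shifted coefficient columns of `g`. -/
noncomputable def sylvester {R : Type*} [CommRing R] (f g : R[X]) (m n : ℕ) :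
    Matrix (Fin (m + n)) (Fin (m + n)) R :=
  Matrix.of fun i j =>
    if (j : ℕ) < n then
      (if (j : ℕ) ≤ (i : ℕ) ∧ (i : ℕ) - (j : ℕ) ≤ m then
        f.coeff (m - ((i : ℕ) - (j : ℕ))) else 0)
    else
      (if (j : ℕ) - n ≤ (i : ℕ) ∧ (i : ℕ) - ((j : ℕ) - n) ≤ n then
        g.coeff (n - ((i : ℕ) - ((j : ℕ) - n))) else 0)

/-- The resultant of `f` (of degree `m`) and `g` (of degree `n`), as the determinant of the
Sylvester matrix. -/
noncomputable def res {R : Type*} [CommRing R] (f g : R[X]) (m n : ℕ) : R :=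
  (_root_.sylvester f g m n).det

section CubicQuadratic

variable {R : Type*} [CommRing R] (a b c r0 r1 r2 r3 l1 l2 : R)

theorem sylvester_cubic_quadratic :
    _root_.sylvester (C r0 * X ^ 3 + C r1 * X ^ 2 + C r2 * X + C r3)
        (C a * X ^ 2 + C b * X + C c) 3 2 =
      !![r0, 0, a, 0, 0; r1, r0, b, a, 0; r2, r1, c, b, a; r3, r2, 0, c, b; 0, r3, 0, 0, c] := by
  ext i j
  fin_cases i <;> fin_cases j <;>
    simp [_root_.sylvester, coeff_X_pow, coeff_C, coeff_X]

theorem cubic_sub_linear_mul_quadratic :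
    C r0 * X ^ 3 + C r1 * X ^ 2 + C r2 * X + C r3 -
        (C l1 * X + C l2) * (C a * X ^ 2 + C b * X + C c) =
      C (r0 - a * l1) * X ^ 3 + C (r1 - b * l1 - a * l2) * X ^ 2 + C (r2 - c * l1 - b * l2) * X +
        C (r3 - c * l2) := by
  simp only [map_sub, map_mul]
  ring

theorem res_cubic_sub_linear_mul_quadratic :
    res (C r0 * X ^ 3 + C r1 * X ^ 2 + C r2 * X + C r3 -
        (C l1 * X + C l2) * (C a * X ^ 2 + C b * X + C c)) (C a * X ^ 2 + C b * X + C c) 3 2 =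
      res (C r0 * X ^ 3 + C r1 * X ^ 2 + C r2 * X + C r3) (C a * X ^ 2 + C b * X + C c) 3 2 := by
  -- The Sylvester matrix of `f` is that of `f - (l₁x + l₂) g` times the unipotent matrix `E`.
  let E : Matrix (Fin 5) (Fin 5) R :=
    !![1, 0, 0, 0, 0; 0, 1, 0, 0, 0; l1, 0, 1, 0, 0; l2, l1, 0, 1, 0; 0, l2, 0, 0, 1]
  have hE : E.det = 1 := by
    simp [E, Matrix.det_succ_row_zero, Fin.sum_univ_succ, Fin.succAbove]
  rw [cubic_sub_linear_mul_quadratic, res, res, sylvester_cubic_quadratic,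
    sylvester_cubic_quadratic, ← mul_one (Matrix.det _), ← hE, ← Matrix.det_mul]
  congr 1
  ext i j
  fin_cases i <;> fin_cases j <;> simp [E, Matrix.mul_apply, Fin.sum_univ_succ]

theorem res_cubic_quadratic_of_low_coeffs_eq_zero (u v : R) :
    res (C u * X ^ 3 + C v * X ^ 2 + C 0 * X + C 0) (C a * X ^ 2 + C b * X + C c) 3 2 =
      c ^ 2 * (c * u ^ 2 - b * u * v + a * v ^ 2) := by
  rw [res, sylvester_cubic_quadratic]
  simp [Matrix.det_succ_row_zero, Fin.sum_univ_succ, Fin.succAbove]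
  ring

end CubicQuadratic

theorem resultant_cubic_quadratic_conic_general {F : Type*} [Field F]
    (a b c r0 r1 r2 r3 l1 l2 Xv Yv : F)
    (h1 : c * l1 + b * l2 = r2) (h2 : c * l2 = r3)
    (hX : Xv = r0 - a * l1) (hY : Yv = r1 - b * l1 - a * l2) :
    res (C r0 * X ^ 3 + C r1 * X ^ 2 + C r2 * X + C r3) (C a * X ^ 2 + C b * X + C c) 3 2 =
      c ^ 2 * (c * Xv ^ 2 - b * Xv * Yv + a * Yv ^ 2) := by
  have hr2 : r2 - c * l1 - b * l2 = 0 := by rw [← h1]; ring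
  have hr3 : r3 - c * l2 = 0 := by rw [← h2]; ring
  rw [← res_cubic_sub_linear_mul_quadratic a b c r0 r1 r2 r3 l1 l2, cubic_sub_linear_mul_quadratic,
    hr2, hr3, ← hX, ← hY, res_cubic_quadratic_of_low_coeffs_eq_zero]

/-- If `c ≠ 0`, `(λ₁, λ₂)` solves `cλ₁ + bλ₂ = r₂`, `cλ₂ = r₃`, and `X = r₀ - aλ₁`,
`Y = r₁ - bλ₁ - aλ₂`, then the resultant of `r₀x³ + r₁x² + r₂x + r₃` and `ax² + bx + c`
equals `c²(cX² - bXY + aY²)`. -/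
theorem resultant_cubic_quadratic_conic {F : Type*} [Field F]
    (a b c r0 r1 r2 r3 l1 l2 Xv Yv : F) (hc : c ≠ 0)
    (h1 : c * l1 + b * l2 = r2) (h2 : c * l2 = r3)
    (hX : Xv = r0 - a * l1) (hY : Yv = r1 - b * l1 - a * l2) :
    res (C r0 * X ^ 3 + C r1 * X ^ 2 + C r2 * X + C r3) (C a * X ^ 2 + C b * X + C c) 3 2 =
      c ^ 2 * (c * Xv ^ 2 - b * Xv * Yv + a * Yv ^ 2) :=
  resultant_cubic_quadratic_conic_general a b c r0 r1 r2 r3 l1 l2 Xv Yv h1 h2 hX hY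
end

section
/- Let n ≥ 3 be odd, let a, b, c ∈ ℤ with abc ≠ 0, and suppose there exists a polynomial R ∈ ℤ[x] of degree n with Res(R, ax² + bx + c) = 1. Then the conic X² − (b² − 4ac)Y² = cZ² has a nontrivial rational point, i.e. there exist X, Y, Z ∈ ℚ, not all zero, satisfying the equation with Z ≠ 0. -/
open Polynomial

/-!
The matrix `sylvester f g m n` is Mathlib's `Polynomial.sylvester f g m n` with the order of rows
and of columns reversed, so `res` is Mathlib's `Polynomial.resultant`. Over `ℚ`, reducing `R`
modulo `q = aX² + bX + c` leaves a remainder `r₀ + r₁X`, and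
`Res(R, q) = a ^ (n - 1) * (a r₀² - b r₀ r₁ + c r₁²)`. For odd `n` the factor `a ^ (n - 1)` is a
square, so the form `au² - buv + cv²` represents `1` over `ℚ`, and completing the square,
`(2cv - bu)² - (b² - 4ac)u² = 4c(au² - buv + cv²)`, gives a point of the conic with `Z = 1`.
-/

theorem sylvester_eq_submatrix_rev {R : Type*} [CommRing R] (f g : R[X]) (m n : ℕ) :
    _root_.sylvester f g m n = (Polynomial.sylvester f g m n).submatrix Fin.rev Fin.rev := by
  ext i j
  simp only [_root_.sylvester, Polynomial.sylvester, Matrix.of_apply, Matrix.submatrix_apply]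
  rcases lt_or_ge (j : ℕ) n with hj | hj
  · have : j.rev = Fin.natAdd m ⟨n - 1 - j, by omega⟩ := by ext; simp; omega
    rw [this, Fin.addCases_right, if_pos hj]
    simp only [Set.mem_Icc, Fin.val_rev]
    split_ifs <;> first | rfl | omega | (congr 1; omega)
  · have : j.rev = Fin.castAdd n ⟨m + n - 1 - j, by omega⟩ := by ext; simp; omega
    rw [this, Fin.addCases_left, if_neg (by omega)]
    simp only [Set.mem_Icc, Fin.val_rev]
    split_ifs <;> first | rfl | omega | (congr 1; omega)

theorem res_eq_resultant {R : Type*} [CommRing R] (f g : R[X]) (m n : ℕ) :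
    res f g m n = resultant f g m n := by
  rw [res, sylvester_eq_submatrix_rev]
  exact Matrix.det_submatrix_equiv_self Fin.revPerm _

theorem resultant_linear_quadratic {R : Type*} [CommRing R] (f : R[X]) (a b c : R) :
    resultant f (C a * X ^ 2 + C b * X + C c) 1 2
      = a * f.coeff 0 ^ 2 - b * f.coeff 0 * f.coeff 1 + c * f.coeff 1 ^ 2 := by
  simp [resultant, Polynomial.sylvester, Matrix.det_fin_three, Fin.addCases, coeff_X, coeff_C]
  ring

theorem natDegree_div_le_sub {K : Type*} [Field K] (f g : K[X]) :
    (f / g).natDegree ≤ f.natDegree - g.natDegree := by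
  rcases eq_or_ne g 0 with rfl | hg
  · simp
  rw [div_def]
  refine (natDegree_C_mul_le _ _).trans ?_
  rw [natDegree_divByMonic _ (monic_mul_leadingCoeff_inv hg),
    natDegree_mul_C (inv_ne_zero (leadingCoeff_ne_zero.2 hg))]

theorem resultant_mod_left {K : Type*} [Field K] {f g : K[X]} {m n : ℕ}
    (hf : f.natDegree ≤ m) (hg : g.natDegree = n) :
    resultant (f % g) g m n = resultant f g m n := by
  rcases lt_or_ge f.natDegree n with hfg | hfg
  · have hg0 : g ≠ 0 := by rintro rfl; simp at hg; omega
    rw [(mod_eq_self_iff hg0).2 (degree_lt_degree (hg ▸ hfg))]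
  · conv_rhs => rw [← EuclideanDomain.mod_add_div f g]
    refine (resultant_add_mul_left _ _ _ _ _ ?_ hg.le).symm
    have := natDegree_div_le_sub f g
    omega

theorem resultant_eq_mul_resultant_mod_left {K : Type*} [Field K] {f g : K[X]} {n k : ℕ}
    (hg : g.natDegree = n + 1) (hf : f.natDegree ≤ n + k) :
    resultant f g (n + k) (n + 1)
      = (-1) ^ ((n + 1) * k) * g.leadingCoeff ^ k * resultant (f % g) g n (n + 1) := by
  have hr : (f % g).natDegree ≤ n := by
    have := natDegree_mod_lt f (q := g) (by omega)
    omega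
  rw [← resultant_mod_left hf hg, resultant_add_left_deg _ _ _ _ _ hr, leadingCoeff, hg]

theorem exists_sq_sub_discrim_mul_sq_eq {K : Type*} [Field K] [NeZero (2 : K)] {a b c u v : K}
    (h : a * u ^ 2 - b * u * v + c * v ^ 2 = 1) :
    ∃ x y : K, x ^ 2 - (b ^ 2 - 4 * a * c) * y ^ 2 = c :=
  ⟨(2 * c * v - b * u) / 2, u / 2, by field_simp; linear_combination 4 * c * h⟩

theorem conic_of_resultant_one_general (n : ℕ) (hodd : Odd n)
    (a b c : ℤ) (habc : a * b * c ≠ 0)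
    (hR : ∃ R : Polynomial ℤ, R.natDegree = n ∧
      res R (C a * X ^ 2 + C b * X + C c) n 2 = 1) :
    ∃ x y z : ℚ, ¬(x = 0 ∧ y = 0 ∧ z = 0) ∧ z ≠ 0 ∧
      x ^ 2 - ((b ^ 2 - 4 * a * c : ℤ) : ℚ) * y ^ 2 = (c : ℚ) * z ^ 2 := by
  obtain ⟨R, hdeg, hres⟩ := hR
  obtain ⟨k, rfl⟩ := hodd
  have ha : (a : ℚ) ≠ 0 := by exact_mod_cast left_ne_zero_of_mul (left_ne_zero_of_mul habc)
  set q : ℚ[X] := C (a : ℚ) * X ^ 2 + C (b : ℚ) * X + C (c : ℚ)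
  have hq : (C a * X ^ 2 + C b * X + C c).map (Int.castRingHom ℚ) = q := by simp [q]
  have hRq : (R.map (Int.castRingHom ℚ)).natDegree ≤ 1 + 2 * k := by
    have := natDegree_map_le (f := Int.castRingHom ℚ) (p := R)
    omega
  have hres_q :=
    resultant_map_map R (C a * X ^ 2 + C b * X + C c) (2 * k + 1) 2 (Int.castRingHom ℚ)
  rw [← res_eq_resultant R, hres, map_one, hq, add_comm (2 * k),
    resultant_eq_mul_resultant_mod_left (natDegree_quadratic ha) hRq,
    resultant_linear_quadratic, leadingCoeff_quadratic ha,
    ((even_two_mul k).mul_left _).neg_one_pow, one_mul] at hres_q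
  set r := R.map (Int.castRingHom ℚ) % q
  obtain ⟨x, y, hxy⟩ := exists_sq_sub_discrim_mul_sq_eq (a := (a : ℚ)) (b := b) (c := c)
    (u := a ^ k * r.coeff 0) (v := a ^ k * r.coeff 1)
    (by linear_combination hres_q)
  exact ⟨x, y, 1, by simp, one_ne_zero, by push_cast; linear_combination hxy⟩

/-- If `n ≥ 3` is odd, `abc ≠ 0`, and some integer polynomial `R` of degree `n` has resultant `1`
with `ax² + bx + c`, then the conic `X² - (b² - 4ac)Y² = cZ²` has a rational point with `Z ≠ 0`. -/
theorem conic_of_resultant_one (n : ℕ) (hn : 3 ≤ n) (hodd : Odd n)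
    (a b c : ℤ) (habc : a * b * c ≠ 0)
    (hR : ∃ R : Polynomial ℤ, R.natDegree = n ∧
      res R (C a * X ^ 2 + C b * X + C c) n 2 = 1) :
    ∃ x y z : ℚ, ¬(x = 0 ∧ y = 0 ∧ z = 0) ∧ z ≠ 0 ∧
      x ^ 2 - ((b ^ 2 - 4 * a * c : ℤ) : ℚ) * y ^ 2 = (c : ℚ) * z ^ 2 :=
  conic_of_resultant_one_general n hodd a b c habc hR
end

section
/- Let d ∈ ℤ and c ∈ ℤ, and suppose the equation X² − dY² = cZ² has a solution in rationals X, Y, Z with Z ≠ 0. Then for every prime p such that the p-adic valuation v_p(d) = 1, the Legendre symbol (c/p) is not equal to −1. -/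
lemma conic_descent (p : ℕ) [Fact p.Prime] (e c : ℤ) (hpe : ¬ (p:ℤ) ∣ e) :
    ∀ n : ℕ, ∀ X Y Z : ℤ, Z.natAbs = n → Z ≠ 0 →
      X ^ 2 - ((p:ℤ) * e) * Y ^ 2 = c * Z ^ 2 → IsSquare (c : ZMod p) := by
  have hp := (Fact.out : p.Prime)
  have hp0 : (p : ℤ) ≠ 0 := by exact_mod_cast hp.ne_zero
  intro n
  induction n using Nat.strong_induction_on with
  | _ n ih =>
    intro X Y Z hn hZ heq
    by_cases hpZ : (p:ℤ) ∣ Z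
    · have hpX : (p:ℤ) ∣ X := by
        have h2 : (p:ℤ) ∣ X ^ 2 := by
          obtain ⟨Z₁, rfl⟩ := hpZ
          refine ⟨e * Y ^ 2 + c * p * Z₁ ^ 2, by linear_combination heq⟩
        exact (Int.Prime.dvd_pow' hp h2)
      obtain ⟨X₁, rfl⟩ := hpX
      obtain ⟨Z₁, rfl⟩ := hpZ
      have hpY : (p:ℤ) ∣ Y := by
        have h3 : (p:ℤ) ∣ e * Y ^ 2 := by
          refine ⟨X₁ ^ 2 - c * Z₁ ^ 2, ?_⟩
          have : (p:ℤ) * (e * Y ^ 2) = (p:ℤ) * ((p:ℤ) * (X₁ ^ 2 - c * Z₁ ^ 2)) := by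
            linear_combination -heq
          exact mul_left_cancel₀ hp0 this
        rcases (Int.Prime.dvd_mul' hp h3) with h | h
        · exact absurd h hpe
        · exact Int.Prime.dvd_pow' hp h
      obtain ⟨Y₁, rfl⟩ := hpY
      have hZ₁ : Z₁ ≠ 0 := by rintro rfl; simp at hZ
      refine ih Z₁.natAbs ?_ X₁ Y₁ Z₁ rfl hZ₁ ?_
      · rw [← hn, Int.natAbs_mul]
        have h1 : 0 < Z₁.natAbs := Int.natAbs_pos.mpr hZ₁
        have h2 : 2 ≤ (p:ℤ).natAbs := by simpa using hp.two_le
        nlinarith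
      · have : (p:ℤ) ^ 2 * (X₁ ^ 2 - (p:ℤ) * e * Y₁ ^ 2) = (p:ℤ) ^ 2 * (c * Z₁ ^ 2) := by
          linear_combination heq
        exact mul_left_cancel₀ (pow_ne_zero 2 hp0) this
    · have hZp : (Z : ZMod p) ≠ 0 := by
        rwa [Ne, ZMod.intCast_zmod_eq_zero_iff_dvd]
      have hmod : (X : ZMod p) ^ 2 = (c : ZMod p) * (Z : ZMod p) ^ 2 := by
        have := congrArg (fun t : ℤ => (t : ZMod p)) heq
        push_cast at this
        simpa [ZMod.natCast_self] using this
      refine ⟨(X : ZMod p) * (Z : ZMod p)⁻¹, ?_⟩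
      field_simp
      linear_combination -hmod

/-- If `X² - dY² = cZ²` has a rational solution with `Z ≠ 0`, then for every prime `p` with
`v_p(d) = 1` the Legendre symbol `(c/p)` is not `-1`. -/
theorem legendre_of_conic_soluble (d c : ℤ)
    (h : ∃ x y z : ℚ, z ≠ 0 ∧ x ^ 2 - (d : ℚ) * y ^ 2 = (c : ℚ) * z ^ 2) :
    ∀ p : ℕ, (hp : p.Prime) → padicValInt p d = 1 →
      @legendreSym p ⟨hp⟩ c ≠ -1 := by
  intro p hp hv hsym
  haveI : Fact p.Prime := ⟨hp⟩
  obtain ⟨x, y, z, hz, heq⟩ := h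
  -- d = p * e with p ∤ e
  have hd0 : d ≠ 0 := by rintro rfl; simp [padicValInt.zero] at hv
  have hpd : (p:ℤ) ^ 1 ∣ d := (padicValInt_dvd_iff 1 d).mpr (Or.inr hv.ge)
  rw [pow_one] at hpd
  obtain ⟨e, hde⟩ := hpd
  have hpe : ¬ (p:ℤ) ∣ e := by
    intro ⟨f, hf⟩
    have : (p:ℤ) ^ 2 ∣ d := ⟨f, by rw [hde, hf]; ring⟩
    rcases (padicValInt_dvd_iff 2 d).mp this with h | h
    · exact hd0 h
    · omega
  -- integer solution
  set N : ℚ := (x.den : ℚ) * y.den * z.den with hN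
  set X : ℤ := x.num * y.den * z.den with hX
  set Y : ℤ := y.num * x.den * z.den with hY
  set Z : ℤ := z.num * x.den * y.den with hZdef
  have hxden : ((x.den : ℚ)) ≠ 0 := by exact_mod_cast x.den_nz
  have hyden : ((y.den : ℚ)) ≠ 0 := by exact_mod_cast y.den_nz
  have hzden : ((z.den : ℚ)) ≠ 0 := by exact_mod_cast z.den_nz
  have hxq : (x.num : ℚ) = x * x.den := by
    exact (div_eq_iff hxden).mp (Rat.num_div_den x)
  have hyq : (y.num : ℚ) = y * y.den := by
    exact (div_eq_iff hyden).mp (Rat.num_div_den y)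
  have hzq : (z.num : ℚ) = z * z.den := by
    exact (div_eq_iff hzden).mp (Rat.num_div_den z)
  have key : (X:ℚ) ^ 2 - (d:ℚ) * (Y:ℚ) ^ 2 = (c:ℚ) * (Z:ℚ) ^ 2 := by
    have hXq : (X:ℚ) = x * N := by push_cast [hX, hN]; rw [hxq]; ring
    have hYq : (Y:ℚ) = y * N := by push_cast [hY, hN]; rw [hyq]; ring
    have hZq : (Z:ℚ) = z * N := by push_cast [hZdef, hN]; rw [hzq]; ring
    rw [hXq, hYq, hZq]
    linear_combination N ^ 2 * heq
  have hEq : X ^ 2 - d * Y ^ 2 = c * Z ^ 2 := by exact_mod_cast key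
  have hZ0 : Z ≠ 0 := by
    have h1 : z.num ≠ 0 := Rat.num_ne_zero.mpr hz
    have h2 : (x.den : ℤ) ≠ 0 := by exact_mod_cast x.den_nz
    have h3 : (y.den : ℤ) ≠ 0 := by exact_mod_cast y.den_nz
    simp [hZdef, h1, h2, h3]
  rw [hde] at hEq
  have hsq : IsSquare (c : ZMod p) :=
    conic_descent p e c hpe Z.natAbs X Y Z rfl hZ0 hEq
  have hc0 : (c : ZMod p) ≠ 0 := by
    intro h0
    have := (legendreSym.eq_zero_iff p c).mpr h0
    rw [this] at hsym
    norm_num at hsym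
  have := (legendreSym.eq_one_iff p hc0).mpr hsq
  rw [this] at hsym
  norm_num at hsym
end

section
/- Let p be an odd prime and let S_p be the number of triples (a, b, c) ∈ (ℤ/p²ℤ)³ such that v_p(b² − 4ac) = 1 (i.e., p divides b² − 4ac exactly once) and c reduces mod p to a quadratic non-residue. Then S_p ≥ p³·(p(p−1)/2) − 4p⁴, in particular S_p ≥ p⁵/2 − C·p⁴ for an absolute constant C. -/
/-!
For `c` a unit of `ZMod (p²)`, the map `a ↦ b² - 4ac` is a bijection, so the triples are in
bijection with pairs `(b, c)` times the `p - 1` discriminants of valuation exactly one.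
Reduction `ZMod (p²) → ZMod p` has fibres of size `p` and there are `(p - 1) / 2`
non-residues mod `p`, so there are exactly `p³ (p - 1)² / 2` triples.
-/

open Finset

theorem AddMonoidHom.card_preimage_mul_card {G H F : Type*} [AddGroup G] [Fintype G]
    [AddMonoid H] [Fintype H] [DecidableEq H] [FunLike F G H] [AddMonoidHomClass F G H] (f : F)
    (hf : Function.Surjective f) (s : Finset H) :
    #{g | f g ∈ s} * Fintype.card H = #s * Fintype.card G := by
  obtain ⟨g₀, hg₀⟩ := hf 0
  have fiber (y : H) : #{g | f g = y} = #{g | f g = 0} :=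
    AddMonoidHom.card_fiber_eq_of_mem_range f (hf y) ⟨g₀, hg₀⟩
  have hG : Fintype.card G = Fintype.card H * #{g | f g = 0} := by
    rw [← card_univ, card_eq_sum_card_fiberwise (t := univ) (fun g _ => mem_univ (f g))]
    simp only [fiber, sum_const, card_univ, smul_eq_mul]
  have hs : #{g | f g ∈ s} = #s * #{g | f g = 0} := by
    rw [card_eq_sum_card_fiberwise (f := f) (t := s) fun g hg => by simpa using hg,
      sum_congr rfl fun y hy => ?_, sum_const, smul_eq_mul]
    rw [filter_filter, ← fiber y]
    congr 1; ext g
    simp only [mem_filter, mem_univ, true_and, and_iff_right_iff_imp]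
    rintro rfl; exact hy
  rw [hs, hG]; ring

theorem quadraticChar_card_eq_neg_one {F : Type*} [Field F] [Fintype F] [DecidableEq F]
    (hF : ringChar F ≠ 2) :
    2 * #{a : F | quadraticChar F a = -1} + 1 = Fintype.card F := by
  set χ := quadraticChar F
  have hzero : #{a : F | χ a = 0} = 1 := by
    simp only [χ, quadraticChar_eq_zero_iff, filter_eq', mem_univ, if_true, card_singleton]
  have hsum : ((#{a | χ a = 1} : ℕ) : ℤ) - #{a | χ a = -1} = 0 := by
    rw [← quadraticChar_sum_zero hF, natCast_card_filter, natCast_card_filter,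
      ← sum_sub_distrib]
    refine sum_congr rfl fun a _ => ?_
    rcases quadraticChar_isQuadratic F a with h | h | h <;> simp [χ, h]
  have htotal : (Fintype.card F : ℤ) = #{a | χ a = 0} + #{a | χ a = 1} + #{a | χ a = -1} := by
    rw [← card_univ, natCast_card_filter, natCast_card_filter, natCast_card_filter,
      ← sum_add_distrib, ← sum_add_distrib, card_eq_sum_ones, Nat.cast_sum]
    refine sum_congr rfl fun a _ => ?_
    rcases quadraticChar_isQuadratic F a with h | h | h <;> simp [χ, h]
  rw [hzero] at htotal
  omega

theorem sq_sub_four_mul_inverse_mul {R : Type*} [CommRing R] (b c d : R)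
    (hc : IsUnit (4 * c)) :
    b ^ 2 - 4 * ((b ^ 2 - d) * Ring.inverse (4 * c)) * c = d := by
  calc _ = b ^ 2 - (b ^ 2 - d) * (4 * c * Ring.inverse (4 * c)) := by ring
    _ = d := by rw [Ring.mul_inverse_cancel _ hc]; ring

noncomputable def discrEquiv {R : Type*} [CommRing R] (P Q : R → Prop)
    (hQ : ∀ c, Q c → IsUnit (4 * c)) :
    {t : R × R × R // P (t.2.1 ^ 2 - 4 * t.1 * t.2.2) ∧ Q t.2.2} ≃
      R × {c // Q c} × {d // P d} where
  toFun t := (t.1.2.1, ⟨t.1.2.2, t.2.2⟩, ⟨_, t.2.1⟩)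
  invFun := fun ⟨b, ⟨c, hc⟩, ⟨d, hd⟩⟩ =>
    ⟨((b ^ 2 - d) * Ring.inverse (4 * c), b, c), by
      rwa [sq_sub_four_mul_inverse_mul b c d (hQ c hc), and_iff_left hc]⟩
  left_inv := fun ⟨(a, b, c), _, hc⟩ => by
    ext
    · show (b ^ 2 - (b ^ 2 - 4 * a * c)) * Ring.inverse (4 * c) = a
      rw [sub_sub_cancel, mul_right_comm 4 a c, mul_comm (4 * c) a,
        Ring.mul_inverse_cancel_right _ _ (hQ c hc)]
    · rfl
    · rfl
  right_inv := fun ⟨b, ⟨c, hc⟩, ⟨d, hd⟩⟩ => by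
    simp [sq_sub_four_mul_inverse_mul b c d (hQ c hc)]

namespace ZMod

theorem isUnit_iff_castHom_ne_zero {p d : ℕ} (hp : p.Prime) (hd : d ≠ 0) (x : ZMod (p ^ d)) :
    IsUnit x ↔ castHom (dvd_pow_self p hd) (ZMod p) x ≠ 0 := by
  have : NeZero (p ^ d) := ⟨pow_ne_zero d hp.ne_zero⟩
  rw [← natCast_zmod_val x, isUnit_natCast_iff_not_dvd_pow hp (Nat.pos_of_ne_zero hd),
    map_natCast, Ne, natCast_eq_zero_iff]

variable (p : ℕ) [Fact p.Prime]

theorem card_castHom_preimage (s : Finset (ZMod p)) :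
    #{x : ZMod (p ^ 2) | castHom (dvd_pow_self p two_ne_zero) (ZMod p) x ∈ s} = p * #s := by
  have h := AddMonoidHom.card_preimage_mul_card (castHom (dvd_pow_self p two_ne_zero) (ZMod p))
    (castHom_surjective _) s
  rw [card, card] at h
  exact Nat.eq_of_mul_eq_mul_right (Fact.out : p.Prime).pos (by rw [h]; ring)

theorem two_mul_card_quadraticChar_castHom_eq_neg_one (hp : p ≠ 2) :
    2 * Nat.card {c : ZMod (p ^ 2) //
      quadraticChar (ZMod p) (castHom (dvd_pow_self p two_ne_zero) (ZMod p) c) = -1} =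
      p * (p - 1) := by
  classical
  have hχ := quadraticChar_card_eq_neg_one (F := ZMod p) (by rwa [ringChar_zmod_n])
  have hlift := card_castHom_preimage p {y | quadraticChar (ZMod p) y = -1}
  simp only [mem_filter, mem_univ, true_and] at hlift
  rw [card] at hχ
  rw [Nat.card_eq_fintype_card, Fintype.card_subtype, hlift,
    show p - 1 = 2 * #{y : ZMod p | quadraticChar (ZMod p) y = -1} by omega]
  ring

theorem isUnit_four_mul_of_quadraticChar_eq_neg_one (hp : p ≠ 2) (c : ZMod (p ^ 2))
    (hc : quadraticChar (ZMod p) (castHom (dvd_pow_self p two_ne_zero) (ZMod p) c) = -1) :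
    IsUnit (4 * c) := by
  have hc0 : castHom (dvd_pow_self p two_ne_zero) (ZMod p) c ≠ 0 := by
    rintro h
    rw [h, quadraticChar_zero] at hc
    exact absurd hc (by decide)
  have h2 : (2 : ZMod p) ≠ 0 := Ring.two_ne_zero (by rwa [ringChar_zmod_n])
  rw [isUnit_iff_castHom_ne_zero Fact.out two_ne_zero, map_mul, map_ofNat]
  exact mul_ne_zero (by simpa [show (4 : ZMod p) = 2 ^ 2 by norm_num] using h2) hc0

theorem card_castHom_eq_zero_and_ne_zero :
    Nat.card {d : ZMod (p ^ 2) //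
      castHom (dvd_pow_self p two_ne_zero) (ZMod p) d = 0 ∧ d ≠ 0} = p - 1 := by
  classical
  have hker := card_castHom_preimage p {0}
  simp only [mem_singleton, card_singleton, mul_one] at hker
  rw [Nat.card_eq_fintype_card, Fintype.card_subtype, ← filter_filter, filter_ne',
    card_erase_of_mem (by rw [mem_filter]; exact ⟨mem_univ _, map_zero _⟩), hker]

end ZMod

theorem two_mul_card_valuation_one_nonresidue (p : ℕ) [Fact p.Prime] (hp : p ≠ 2) :
    2 * Nat.card {t : ZMod (p ^ 2) × ZMod (p ^ 2) × ZMod (p ^ 2) //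
        ZMod.castHom (dvd_pow_self p two_ne_zero) (ZMod p) (t.2.1 ^ 2 - 4 * t.1 * t.2.2) = 0 ∧
        t.2.1 ^ 2 - 4 * t.1 * t.2.2 ≠ 0 ∧
        quadraticChar (ZMod p) (ZMod.castHom (dvd_pow_self p two_ne_zero) (ZMod p) t.2.2) = -1} =
      p ^ 3 * (p - 1) ^ 2 := by
  set f := ZMod.castHom (dvd_pow_self p two_ne_zero) (ZMod p)
  have hunit := ZMod.isUnit_four_mul_of_quadraticChar_eq_neg_one p hp
  rw [Nat.card_congr ((Equiv.subtypeEquivRight fun _ => and_assoc.symm).trans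
      (discrEquiv (fun d => f d = 0 ∧ d ≠ 0) _ hunit)), Nat.card_prod, Nat.card_prod,
    Nat.card_zmod, ZMod.card_castHom_eq_zero_and_ne_zero, mul_left_comm, ← mul_assoc 2,
    ZMod.two_mul_card_quadraticChar_castHom_eq_neg_one p hp]
  ring

/-- For an odd prime `p`, the number `S_p` of triples `(a,b,c)` of residues mod `p²` such that
`b² - 4ac` is divisible by `p` exactly once and `c` reduces to a quadratic non-residue mod `p`
satisfies `S_p ≥ p³ · (p(p-1)/2) - 4p⁴`. -/
theorem count_valuation_one_nonresidue (p : ℕ) [Fact p.Prime] (hp : p ≠ 2) :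
    (p : ℤ) ^ 3 * ((p * (p - 1) : ℤ) / 2) - 4 * (p : ℤ) ^ 4 ≤
      (Nat.card {t : ZMod (p ^ 2) × ZMod (p ^ 2) × ZMod (p ^ 2) //
        ZMod.castHom (dvd_pow_self p (two_ne_zero)) (ZMod p)
            (t.2.1 ^ 2 - 4 * t.1 * t.2.2) = 0 ∧
        t.2.1 ^ 2 - 4 * t.1 * t.2.2 ≠ 0 ∧
        quadraticChar (ZMod p) (ZMod.castHom (dvd_pow_self p (two_ne_zero)) (ZMod p) t.2.2)
          = -1} : ℤ) := by
  have hcard := two_mul_card_valuation_one_nonresidue p hp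
  zify [(Fact.out : p.Prime).one_le] at hcard
  have hhalf : 2 * ((p * (p - 1) : ℤ) / 2) ≤ p * (p - 1) := Int.mul_ediv_self_le two_ne_zero
  have hp3 : (0 : ℤ) ≤ p ^ 3 := by positivity
  -- twice the left side is at most `p⁴ (p - 1) - 8 p⁴ ≤ p³ (p - 1)²`
  nlinarith [mul_le_mul_of_nonneg_left hhalf hp3,
    mul_nonneg hp3 (by positivity : (0 : ℤ) ≤ 7 * p + 1)]
end

section
/- Let n ∈ ℕ, let a, b, c ∈ ℤ, and let g = gcd(a, gcd(b, c)). If R ∈ ℤ[x] has degree n, then gⁿ divides Res(R, ax² + bx + c). -/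
open Polynomial

section Resultant

variable {S : Type*} [CommRing S]

theorem sylvester_C_mul_right (f q : S[X]) (m n : ℕ) (r : S) :
    _root_.sylvester f (C r * q) m n =
      Matrix.of fun i j : Fin (m + n) =>
        (if (j : ℕ) < n then 1 else r) * _root_.sylvester f q m n i j := by
  ext i j
  simp only [_root_.sylvester, Matrix.of_apply, coeff_C_mul]
  split_ifs <;> ring

theorem Fin.prod_ite_lt_one_eq_pow (m n : ℕ) (r : S) :
    ∏ j : Fin (m + n), (if (j : ℕ) < n then 1 else r) = r ^ m := by
  rw [Fin.prod_univ_eq_prod_range (fun j => if j < n then 1 else r), add_comm,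
    Finset.prod_range_add]
  have low : ∏ j ∈ Finset.range n, (if j < n then (1 : S) else r) = 1 :=
    Finset.prod_eq_one fun j hj => if_pos (Finset.mem_range.mp hj)
  simp [low]

theorem res_C_mul_right (f q : S[X]) (m n : ℕ) (r : S) :
    res f (C r * q) m n = r ^ m * res f q m n := by
  rw [res, res, sylvester_C_mul_right, Matrix.det_mul_row, Fin.prod_ite_lt_one_eq_pow]

theorem pow_dvd_res_of_C_dvd {f q : S[X]} {r : S} (m n : ℕ) (h : C r ∣ q) :
    r ^ m ∣ res f q m n := by
  obtain ⟨q', rfl⟩ := h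
  rw [res_C_mul_right]
  exact dvd_mul_right _ _

end Resultant

theorem C_gcd_dvd_quadratic (a b c : ℤ) :
    C (Int.gcd a (Int.gcd b c) : ℤ) ∣ C a * X ^ 2 + C b * X + C c := by
  set g : ℤ := (Int.gcd a (Int.gcd b c) : ℤ)
  have ha : g ∣ a := Int.gcd_dvd_left _ _
  have hb : g ∣ b := (Int.gcd_dvd_right _ _).trans (Int.gcd_dvd_left _ _)
  have hc : g ∣ c := (Int.gcd_dvd_right _ _).trans (Int.gcd_dvd_right _ _)
  exact (((map_dvd C ha).mul_right _).add ((map_dvd C hb).mul_right _)).add (map_dvd C hc)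

theorem gcd_pow_dvd_resultant_general (n : ℕ) (a b c : ℤ) (R : Polynomial ℤ) :
    (Int.gcd a (Int.gcd b c) : ℤ) ^ n ∣ res R (C a * X ^ 2 + C b * X + C c) n 2 :=
  pow_dvd_res_of_C_dvd n 2 (C_gcd_dvd_quadratic a b c)

/-- If `g = gcd(a, gcd(b, c))` and `R ∈ ℤ[x]` has degree `n`, then `gⁿ` divides the resultant
of `R` and `ax² + bx + c`. -/
theorem gcd_pow_dvd_resultant (n : ℕ) (a b c : ℤ) (R : Polynomial ℤ) (hR : R.natDegree = n) :
    (Int.gcd a (Int.gcd b c) : ℤ) ^ n ∣ res R (C a * X ^ 2 + C b * X + C c) n 2 :=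
  gcd_pow_dvd_resultant_general n a b c R
end
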